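/- arXiv:2211.13001 — 2 statements merged into one kernel-verified Lean document; each statement's English description precedes it below -/
import Mathlib

section
/- For the n = 2 simplex gradient flow written in the form ẋᵢ - ẋⱼ = (κ/(4N²)) Σ_{k,ℓ=1}^N [ -‖xₖ - x_ℓ‖²(xᵢ - xⱼ) + ⟨xᵢ - xⱼ, xₖ - x_ℓ⟩(xₖ - x_ℓ) ] with κ ≥ 0, the pairwise squared distances are non-increasing: d/dt ‖xᵢ(t) - xⱼ(t)‖² ≤ 0 for all i, j and all t. -/
/-- for the `n = 2` simplex gradient flow, all pairwise squared distances are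
non-increasing in time. -/
theorem pairwise_distances_nonincreasing {d N : ℕ} (κ : ℝ) (hκ : 0 ≤ κ)
    (x : Fin N → ℝ → EuclideanSpace ℝ (Fin d))
    (hode : ∀ i j t, HasDerivAt (fun s => x i s - x j s)
      ((κ / (4 * N ^ 2)) •
        ∑ k, ∑ ℓ,
          (-(‖x k t - x ℓ t‖ ^ 2) • (x i t - x j t)
            + (inner ℝ (x i t - x j t) (x k t - x ℓ t) : ℝ) • (x k t - x ℓ t))) t) :
    ∀ i j (t : ℝ), deriv (fun s => ‖x i s - x j s‖ ^ 2) t ≤ 0 := by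
  intro i j t
  set y : ℝ → EuclideanSpace ℝ (Fin d) := fun s => x i s - x j s with hy
  set v : EuclideanSpace ℝ (Fin d) :=
    (κ / (4 * N ^ 2)) •
      ∑ k, ∑ ℓ,
        (-(‖x k t - x ℓ t‖ ^ 2) • (x i t - x j t)
          + (inner ℝ (x i t - x j t) (x k t - x ℓ t) : ℝ) • (x k t - x ℓ t)) with hv
  have hyd : HasDerivAt y v t := hode i j t
  have hsq : HasDerivAt (fun s => ‖y s‖ ^ 2) ((inner ℝ (y t) v : ℝ) + inner ℝ v (y t)) t := by
    have h := (hyd.inner ℝ hyd)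
    have he : (fun s => ‖y s‖ ^ 2) = fun s => (inner ℝ (y s) (y s) : ℝ) :=
      funext fun s => (real_inner_self_eq_norm_sq (y s)).symm
    rw [he]; exact h
  rw [hsq.deriv]
  have hinner : (inner ℝ v (y t) : ℝ) ≤ 0 := by
    rw [hv, real_inner_smul_left, sum_inner]
    have hc : 0 ≤ κ / (4 * (N : ℝ) ^ 2) := by positivity
    apply mul_nonpos_of_nonneg_of_nonpos hc
    apply Finset.sum_nonpos
    intro k _
    rw [sum_inner]
    apply Finset.sum_nonpos
    intro ℓ _
    rw [inner_add_left, real_inner_smul_left, real_inner_smul_left]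
    have h1 : (inner ℝ (x i t - x j t) (y t) : ℝ) = ‖x i t - x j t‖ ^ 2 := by
      rw [hy]; exact real_inner_self_eq_norm_sq _
    have h2 : (inner ℝ (x k t - x ℓ t) (y t) : ℝ) = inner ℝ (x i t - x j t) (x k t - x ℓ t) := by
      rw [hy]; exact real_inner_comm _ _
    rw [h1, h2]
    have hcs := real_inner_mul_inner_self_le (x i t - x j t) (x k t - x ℓ t)
    nlinarith [real_inner_self_eq_norm_sq (x k t - x ℓ t),
      real_inner_self_eq_norm_sq (x i t - x j t)]
  have hcomm : (inner ℝ (y t) v : ℝ) = inner ℝ v (y t) := real_inner_comm _ _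
  linarith
end

section
/- Let x₁, ..., x_N ∈ ℝᵈ, let P be a nonempty affine subspace with direction Q, and let Hᵢ be the orthogonal projection of xᵢ onto P. Then for each i, ⟨xᵢ - x̄, (xᵢ - Hᵢ) - (1/N)Σₖ(xₖ - Hₖ)⟩ = ‖(xᵢ - Hᵢ) - (1/N)Σₖ(xₖ - Hₖ)‖² ≥ 0, where x̄ = (1/N)Σₖ xₖ. -/
/-!
Write `rₖ = xₖ - Hₖ`. Since `Hₖ` minimizes the distance from `xₖ` to `P`, each residual `rₖ` is
orthogonal to the direction `Q` of `P`, hence so is `e = rᵢ - r̄`. On the other hand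
`w = Hᵢ - H̄ = N⁻¹ ∑ₖ (Hᵢ - Hₖ)` lies in `Q`. As `xᵢ - x̄ = e + w`, the inner product
`⟪xᵢ - x̄, e⟫` reduces to `‖e‖²`.
-/

open Finset

theorem AffineSubspace.sub_mem_orthogonal_direction_of_forall_norm_sub_le
    {E : Type*} [NormedAddCommGroup E] [InnerProductSpace ℝ E]
    {P : AffineSubspace ℝ E} {x h : E} (hh : h ∈ P) (hmin : ∀ p ∈ P, ‖x - h‖ ≤ ‖x - p‖) :
    x - h ∈ P.directionᗮ := by
  have hinf : ‖(x - h) - 0‖ = ⨅ w : (P.direction : Set E), ‖(x - h) - w‖ := by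
    refine le_antisymm (le_ciInf fun w => ?_) ?_
    · simpa [sub_sub, add_comm] using hmin _ (AffineSubspace.vadd_mem_of_mem_direction w.2 hh)
    · exact ciInf_le ⟨0, Set.forall_mem_range.2 fun _ => norm_nonneg _⟩
        (⟨0, P.direction.zero_mem⟩ : (P.direction : Set E))
  rw [Submodule.mem_orthogonal']
  simpa using
    (Submodule.norm_eq_iInf_iff_real_inner_eq_zero P.direction P.direction.zero_mem).1 hinf

theorem Submodule.sub_inv_card_smul_sum_mem {𝕜 M ι : Type*} [Field 𝕜] [CharZero 𝕜]
    [AddCommGroup M] [Module 𝕜 M] [Fintype ι] (K : Submodule 𝕜 M) {v : ι → M}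
    (hv : ∀ i j, v i - v j ∈ K) (i : ι) :
    v i - (Fintype.card ι : 𝕜)⁻¹ • ∑ k, v k ∈ K := by
  have : Nonempty ι := ⟨i⟩
  have hcard : (Fintype.card ι : 𝕜) ≠ 0 := Nat.cast_ne_zero.2 Fintype.card_ne_zero
  have hmean : v i - (Fintype.card ι : 𝕜)⁻¹ • ∑ k, v k
      = (Fintype.card ι : 𝕜)⁻¹ • ∑ k, (v i - v k) := by
    rw [sum_sub_distrib, sum_const, card_univ, smul_sub, ← Nat.cast_smul_eq_nsmul 𝕜, smul_smul,
      inv_mul_cancel₀ hcard, one_smul]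
  rw [hmean]
  exact K.smul_mem _ (K.sum_mem fun k _ => hv i k)

/-- with `Hᵢ` the orthogonal projection of `xᵢ` onto a nonempty affine subspace
`P` and `x̄` the center of mass, for each `i`:
`⟨xᵢ - x̄, (xᵢ - Hᵢ) - (1/N)∑ₖ(xₖ - Hₖ)⟩ = ‖(xᵢ - Hᵢ) - (1/N)∑ₖ(xₖ - Hₖ)‖² ≥ 0`. -/
theorem inner_center_proj_eq_sq_norm {d N : ℕ}
    (P : AffineSubspace ℝ (EuclideanSpace ℝ (Fin d)))
    (x H : Fin N → EuclideanSpace ℝ (Fin d))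
    (hH : ∀ i, H i ∈ P) (hmin : ∀ i, ∀ p ∈ P, ‖x i - H i‖ ≤ ‖x i - p‖) :
    ∀ i : Fin N,
      (inner ℝ (x i - (N : ℝ)⁻¹ • ∑ k, x k)
        ((x i - H i) - (N : ℝ)⁻¹ • ∑ k, (x k - H k)) : ℝ)
        = ‖(x i - H i) - (N : ℝ)⁻¹ • ∑ k, (x k - H k)‖ ^ 2 ∧
      (0 : ℝ) ≤ ‖(x i - H i) - (N : ℝ)⁻¹ • ∑ k, (x k - H k)‖ ^ 2 := by
  intro i
  refine ⟨?_, sq_nonneg _⟩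
  have hres : ∀ k, x k - H k ∈ P.directionᗮ := fun k =>
    AffineSubspace.sub_mem_orthogonal_direction_of_forall_norm_sub_le (hH k) (hmin k)
  have he : (x i - H i) - (N : ℝ)⁻¹ • ∑ k, (x k - H k) ∈ P.directionᗮ :=
    sub_mem (hres i) (Submodule.smul_mem _ _ (sum_mem fun k _ => hres k))
  have hw : H i - (N : ℝ)⁻¹ • ∑ k, H k ∈ P.direction := by
    simpa using P.direction.sub_inv_card_smul_sum_mem
      (fun j k => AffineSubspace.vsub_mem_direction (hH j) (hH k)) i
  have hsplit : x i - (N : ℝ)⁻¹ • ∑ k, x k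
      = ((x i - H i) - (N : ℝ)⁻¹ • ∑ k, (x k - H k)) + (H i - (N : ℝ)⁻¹ • ∑ k, H k) := by
    rw [sum_sub_distrib, smul_sub]
    abel
  rw [hsplit, inner_add_left, real_inner_self_eq_norm_sq,
    Submodule.inner_right_of_mem_orthogonal hw he, add_zero]
end
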